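/- arXiv:1604.08448 — 3 statements merged into one kernel-verified Lean document; each statement's English description precedes it below -/
import Mathlib

section
/- Suppose x is locally optimal with respect to single flips, i.e., Δz̃_j(x) ≥ 0 for all j ∈ N. If x_{j₁} = x_{j₂} = 1 for distinct j₁, j₂, then Δz̃_{j₁,j₂}(x) = Δz̃_{j₁}(x) + Δz̃_{j₂}(x) + Σ_{i ∈ S_{j₁}∩S_{j₂}∩(M_L∪M_E), s_i(x)=b_i+1} w̃_i⁺ + Σ_{i ∈ S_{j₁}∩S_{j₂}∩(M_G∪M_E), s_i(x)=b_i+1} w̃_i⁻, and in particular Δz̃_{j₁,j₂}(x) ≥ 0. -/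
/-! Flipping a variable `x_j` from `1` to `0` lowers every row activity `s_i` by `a_{ij}`, so
`Δ_{j₁j₂} - Δ_{j₁} - Δ_{j₂}` splits over the rows into mixed differences of the hinges
`t ↦ max (t - b_i) 0` and `t ↦ max (b_i - t) 0`. With binary steps such a mixed difference vanishes
unless `a_{ij₁} = a_{ij₂} = 1`, and is then a second difference of a hinge at integer points,
which is `1` exactly at the kink `s_i(x) = b_i + 1` and `0` elsewhere. Nonnegativity follows from
local optimality and the nonnegativity of the weights. -/

open scoped Classical BigOperators

noncomputable def sLHS {M N : Type*} [Fintype N] (a : M → N → ℝ) (x : N → ℝ) (i : M) : ℝ :=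
  ∑ j, a i j * x j

noncomputable def penObj {M N : Type*} [Fintype M] [Fintype N]
    (ML MG ME : Finset M) (a : M → N → ℝ) (b : M → ℕ) (c : N → ℝ)
    (wp wm : M → ℝ) (x : N → ℝ) : ℝ :=
  (∑ j, c j * x j)
    + ∑ i ∈ ML ∪ ME, wp i * max (sLHS a x i - (b i : ℝ)) 0
    + ∑ i ∈ MG ∪ ME, wm i * max ((b i : ℝ) - sLHS a x i) 0

noncomputable def flipVar {N : Type*} [DecidableEq N] (x : N → ℝ) (j : N) : N → ℝ :=
  Function.update x j (1 - x j)

noncomputable def Sset {M N : Type*} [Fintype M] (a : M → N → ℝ) (j : N) : Finset M :=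
  Finset.univ.filter (fun i => a i j = 1)

lemma max_zero_second_diff {t : ℝ} (ht : ∃ n : ℤ, t = n) :
    max (t - 1) 0 - 2 * max t 0 + max (t + 1) 0 = if t = 0 then 1 else 0 := by
  obtain ⟨n, rfl⟩ := ht
  have h : max (n - 1) 0 - 2 * max n 0 + max (n + 1) 0 = if n = 0 then 1 else 0 := by
    split_ifs <;> omega
  exact_mod_cast congrArg (Int.cast : ℤ → ℝ) h

lemma mixed_diff_of_binary (f : ℝ → ℝ) (t a₁ a₂ : ℝ)
    (h₁ : a₁ = 0 ∨ a₁ = 1) (h₂ : a₂ = 0 ∨ a₂ = 1) :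
    f (t - a₁ - a₂) - f (t - a₁) - f (t - a₂) + f t
      = if a₁ = 1 ∧ a₂ = 1 then f (t - 2) - 2 * f (t - 1) + f t else 0 := by
  rcases h₁ with rfl | rfl <;> rcases h₂ with rfl | rfl <;> norm_num
  ring_nf

lemma max_sub_zero_mixed_diff {s : ℝ} (hs : ∃ k : ℤ, s = k) (m : ℕ) {a₁ a₂ : ℝ}
    (h₁ : a₁ = 0 ∨ a₁ = 1) (h₂ : a₂ = 0 ∨ a₂ = 1) :
    max (s - a₁ - a₂ - m) 0 - max (s - a₁ - m) 0 - max (s - a₂ - m) 0 + max (s - m) 0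
      = if a₁ = 1 ∧ a₂ = 1 ∧ s = m + 1 then 1 else 0 := by
  rw [mixed_diff_of_binary (fun t => max (t - m) 0) s a₁ a₂ h₁ h₂]
  simp only [← and_assoc]
  rw [ite_and (P := a₁ = 1 ∧ a₂ = 1)]
  refine if_congr Iff.rfl ?_ rfl
  obtain ⟨k, rfl⟩ := hs
  have key := max_zero_second_diff (t := k - 1 - m) ⟨k - 1 - m, by push_cast; rfl⟩
  rw [if_congr (show (k : ℝ) - 1 - m = 0 ↔ (k : ℝ) = m + 1 by constructor <;> intro <;> linarith)
    rfl rfl] at key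
  rw [← key]
  ring_nf

lemma sub_max_zero_mixed_diff {s : ℝ} (hs : ∃ k : ℤ, s = k) (m : ℕ) {a₁ a₂ : ℝ}
    (h₁ : a₁ = 0 ∨ a₁ = 1) (h₂ : a₂ = 0 ∨ a₂ = 1) :
    max ((m : ℝ) - (s - a₁ - a₂)) 0 - max ((m : ℝ) - (s - a₁)) 0 - max ((m : ℝ) - (s - a₂)) 0
        + max ((m : ℝ) - s) 0
      = if a₁ = 1 ∧ a₂ = 1 ∧ s = m + 1 then 1 else 0 := by
  rw [mixed_diff_of_binary (fun t => max (m - t) 0) s a₁ a₂ h₁ h₂]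
  simp only [← and_assoc]
  rw [ite_and (P := a₁ = 1 ∧ a₂ = 1)]
  refine if_congr Iff.rfl ?_ rfl
  obtain ⟨k, rfl⟩ := hs
  have key := max_zero_second_diff (t := m - k + 1) ⟨m - k + 1, by push_cast; rfl⟩
  rw [if_congr (show (m : ℝ) - k + 1 = 0 ↔ (k : ℝ) = m + 1 by constructor <;> intro <;> linarith)
    rfl rfl] at key
  rw [← key]
  ring_nf

lemma flipVar_eq_sub_single {N : Type*} [DecidableEq N] {x : N → ℝ} {j : N} (hj : x j = 1) :
    flipVar x j = x - Pi.single j 1 := by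
  ext k
  rcases eq_or_ne k j with rfl | hk
  · simp [flipVar, hj]
  · simp [flipVar, hk]

lemma sum_mul_flipVar_of_eq_one {N : Type*} [Fintype N] [DecidableEq N] (f : N → ℝ) {x : N → ℝ}
    {j : N} (hj : x j = 1) : ∑ k, f k * flipVar x j k = ∑ k, f k * x k - f j := by
  simp [flipVar_eq_sub_single hj, mul_sub, Finset.sum_sub_distrib, Pi.single_apply]

lemma sLHS_flipVar_of_eq_one {M N : Type*} [Fintype N] [DecidableEq N] (a : M → N → ℝ)
    {x : N → ℝ} {j : N} (hj : x j = 1) (i : M) : sLHS a (flipVar x j) i = sLHS a x i - a i j :=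
  sum_mul_flipVar_of_eq_one (a i) hj

lemma exists_sLHS_eq_intCast {M N : Type*} [Fintype N] {a : M → N → ℝ} {x : N → ℝ}
    (ha : ∀ i j, a i j = 0 ∨ a i j = 1) (hx : ∀ j, x j = 0 ∨ x j = 1) (i : M) :
    ∃ k : ℤ, sLHS a x i = k := by
  have h : ∀ j, ∃ k : ℤ, a i j * x j = k := fun j => by
    rcases ha i j with h | h
    · exact ⟨0, by simp [h]⟩
    · rcases hx j with h' | h'
      · exact ⟨0, by simp [h']⟩
      · exact ⟨1, by simp [h, h']⟩
  choose k hk using h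
  exact ⟨∑ j, k j, by simp [sLHS, hk]⟩

lemma filter_Sset_inter_Sset_inter {M N : Type*} [Fintype M] (a : M → N → ℝ) (j₁ j₂ : N)
    (T : Finset M) (p : M → Prop) [DecidablePred p] :
    (Sset a j₁ ∩ Sset a j₂ ∩ T).filter p = T.filter (fun i => a i j₁ = 1 ∧ a i j₂ = 1 ∧ p i) := by
  ext i
  simp only [Sset, Finset.mem_filter, Finset.mem_inter, Finset.mem_univ, true_and]
  tauto

lemma sum_mul_mixed_diff_eq_sum_filter {M : Type*} (T : Finset M) (w f₁₂ f₁ f₂ f : M → ℝ)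
    (p : M → Prop) [DecidablePred p]
    (h : ∀ i ∈ T, f₁₂ i - f₁ i - f₂ i + f i = if p i then 1 else 0) :
    ∑ i ∈ T, w i * f₁₂ i - ∑ i ∈ T, w i * f₁ i - ∑ i ∈ T, w i * f₂ i + ∑ i ∈ T, w i * f i
      = ∑ i ∈ T.filter p, w i := by
  rw [Finset.sum_filter, ← Finset.sum_sub_distrib, ← Finset.sum_sub_distrib,
    ← Finset.sum_add_distrib]
  refine Finset.sum_congr rfl fun i hi => ?_
  rw [← mul_boole, ← h i hi]
  ring

theorem penObj_mixed_diff_flipVar {M N : Type*} [Fintype M] [Fintype N] [DecidableEq N]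
    (ML MG ME : Finset M) {a : M → N → ℝ} (b : M → ℕ) (c : N → ℝ) (wp wm : M → ℝ)
    (ha : ∀ i j, a i j = 0 ∨ a i j = 1) {x : N → ℝ} (hx : ∀ j, x j = 0 ∨ x j = 1)
    {j₁ j₂ : N} (hne : j₁ ≠ j₂) (h₁ : x j₁ = 1) (h₂ : x j₂ = 1) :
    penObj ML MG ME a b c wp wm (flipVar (flipVar x j₁) j₂)
        - penObj ML MG ME a b c wp wm (flipVar x j₁) - penObj ML MG ME a b c wp wm (flipVar x j₂)
        + penObj ML MG ME a b c wp wm x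
      = ∑ i ∈ (Sset a j₁ ∩ Sset a j₂ ∩ (ML ∪ ME)).filter
            (fun i => sLHS a x i = (b i : ℝ) + 1), wp i
        + ∑ i ∈ (Sset a j₁ ∩ Sset a j₂ ∩ (MG ∪ ME)).filter
            (fun i => sLHS a x i = (b i : ℝ) + 1), wm i := by
  have h₁₂ : flipVar x j₁ j₂ = 1 := by rw [flipVar, Function.update_of_ne hne.symm, h₂]
  have hs := exists_sLHS_eq_intCast ha hx
  rw [filter_Sset_inter_Sset_inter, filter_Sset_inter_Sset_inter]
  have hplus := sum_mul_mixed_diff_eq_sum_filter (ML ∪ ME) wp _ _ _ _ _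
    fun i _ => max_sub_zero_mixed_diff (hs i) (b i) (ha i j₁) (ha i j₂)
  have hminus := sum_mul_mixed_diff_eq_sum_filter (MG ∪ ME) wm _ _ _ _ _
    fun i _ => sub_max_zero_mixed_diff (hs i) (b i) (ha i j₁) (ha i j₂)
  simp only [penObj, sLHS_flipVar_of_eq_one a h₁₂, sLHS_flipVar_of_eq_one a h₁,
    sLHS_flipVar_of_eq_one a h₂, sum_mul_flipVar_of_eq_one c h₁₂, sum_mul_flipVar_of_eq_one c h₁,
    sum_mul_flipVar_of_eq_one c h₂]
  linarith

theorem stmt_5 {M N : Type*} [Fintype M] [Fintype N] [DecidableEq N]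
    (ML MG ME : Finset M) (a : M → N → ℝ) (b : M → ℕ) (c : N → ℝ)
    (wp wm : M → ℝ)
    (ha : ∀ i j, a i j = 0 ∨ a i j = 1)
    (hwp : ∀ i, 0 ≤ wp i) (hwm : ∀ i, 0 ≤ wm i)
    (x : N → ℝ) (hx : ∀ j', x j' = 0 ∨ x j' = 1)
    (hlocal : ∀ j, 0 ≤ penObj ML MG ME a b c wp wm (flipVar x j) - penObj ML MG ME a b c wp wm x)
    (j₁ j₂ : N) (hne : j₁ ≠ j₂) (h1 : x j₁ = 1) (h2 : x j₂ = 1) :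
    (penObj ML MG ME a b c wp wm (flipVar (flipVar x j₁) j₂) - penObj ML MG ME a b c wp wm x
      = (penObj ML MG ME a b c wp wm (flipVar x j₁) - penObj ML MG ME a b c wp wm x)
        + (penObj ML MG ME a b c wp wm (flipVar x j₂) - penObj ML MG ME a b c wp wm x)
        + ∑ i ∈ (Sset a j₁ ∩ Sset a j₂ ∩ (ML ∪ ME)).filter
            (fun i => sLHS a x i = (b i : ℝ) + 1), wp i
        + ∑ i ∈ (Sset a j₁ ∩ Sset a j₂ ∩ (MG ∪ ME)).filter
            (fun i => sLHS a x i = (b i : ℝ) + 1), wm i) ∧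
    0 ≤ penObj ML MG ME a b c wp wm (flipVar (flipVar x j₁) j₂) - penObj ML MG ME a b c wp wm x := by
  have hmixed := penObj_mixed_diff_flipVar ML MG ME b c wp wm ha hx hne h1 h2
  have hwp_sum := Finset.sum_nonneg fun i (_ : i ∈ (Sset a j₁ ∩ Sset a j₂ ∩ (ML ∪ ME)).filter
    (fun i => sLHS a x i = (b i : ℝ) + 1)) => hwp i
  have hwm_sum := Finset.sum_nonneg fun i (_ : i ∈ (Sset a j₁ ∩ Sset a j₂ ∩ (MG ∪ ME)).filter
    (fun i => sLHS a x i = (b i : ℝ) + 1)) => hwm i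
  exact ⟨by linarith, by linarith [hlocal j₁, hlocal j₂]⟩
end

section
/- Suppose Δz̃_j(x) ≥ 0 for all j ∈ N (local optimality for 1-flips). If x_{j₁} = x_{j₂} = 0 for distinct j₁, j₂, then Δz̃_{j₁,j₂}(x) = Δz̃_{j₁}(x) + Δz̃_{j₂}(x) + Σ_{i ∈ S_{j₁}∩S_{j₂}∩(M_L∪M_E), s_i(x)=b_i−1} w̃_i⁺ + Σ_{i ∈ S_{j₁}∩S_{j₂}∩(M_G∪M_E), s_i(x)=b_i−1} w̃_i⁻, and in particular Δz̃_{j₁,j₂}(x) ≥ 0. -/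
open scoped Classical BigOperators

/-
Flipping `x j` from `0` to `1` adds the column `a · j` to the row sums, and `z̃` is a linear
part plus, per row, a hinge `max (· - b i) 0` or `max (b i - ·) 0` of the row sum. The linear part
is additive in the two flips, so `Δz̃_{j₁,j₂} - Δz̃_{j₁} - Δz̃_{j₂}` is a weighted sum over the rows
of mixed second differences of hinges with steps `a i j₁, a i j₂ ∈ {0, 1}`. Such a difference
vanishes unless both steps are `1`, and at an integer point the second difference of a hinge is
`1` exactly when its kink lies strictly between `s` and `s + 2`, i.e. when `s = b i - 1`.
-/

def mixedDiff (f : ℝ → ℝ) (t h₁ h₂ : ℝ) : ℝ :=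
  f (t + h₁ + h₂) - f (t + h₁) - f (t + h₂) + f t

lemma mixedDiff_of_mem_zero_one (f : ℝ → ℝ) (t : ℝ) {h₁ h₂ : ℝ}
    (hh₁ : h₁ = 0 ∨ h₁ = 1) (hh₂ : h₂ = 0 ∨ h₂ = 1) :
    mixedDiff f t h₁ h₂ = if h₁ = 1 ∧ h₂ = 1 then mixedDiff f t 1 1 else 0 := by
  rcases hh₁ with rfl | rfl <;> rcases hh₂ with rfl | rfl <;> norm_num [mixedDiff]

lemma mixedDiff_max_sub_zero {s b : ℝ} (k : ℤ) (hk : s - b = k) :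
    mixedDiff (fun t => max (t - b) 0) s 1 1 = if s = b - 1 then 1 else 0 := by
  have key : max (k + 2) 0 - max (k + 1) 0 - max (k + 1) 0 + max k 0
      = if k = -1 then (1 : ℤ) else 0 := by
    split_ifs <;> omega
  have hcond : s = b - 1 ↔ k = -1 := by
    rw [← @Int.cast_inj ℝ]; push_cast; constructor <;> intro h <;> linarith
  rw [if_congr hcond rfl rfl, mixedDiff,
    show s + 1 + 1 - b = ((k + 2 : ℤ) : ℝ) by push_cast; linarith,
    show s + 1 - b = ((k + 1 : ℤ) : ℝ) by push_cast; linarith, hk]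
  exact_mod_cast key

lemma mixedDiff_max_rsub_zero {s b : ℝ} (k : ℤ) (hk : s - b = k) :
    mixedDiff (fun t => max (b - t) 0) s 1 1 = if s = b - 1 then 1 else 0 := by
  have key : max (-k - 2) 0 - max (-k - 1) 0 - max (-k - 1) 0 + max (-k) 0
      = if k = -1 then (1 : ℤ) else 0 := by
    split_ifs <;> omega
  have hcond : s = b - 1 ↔ k = -1 := by
    rw [← @Int.cast_inj ℝ]; push_cast; constructor <;> intro h <;> linarith
  rw [if_congr hcond rfl rfl, mixedDiff,
    show b - (s + 1 + 1) = ((-k - 2 : ℤ) : ℝ) by push_cast; linarith,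
    show b - (s + 1) = ((-k - 1 : ℤ) : ℝ) by push_cast; linarith,
    show b - s = ((-k : ℤ) : ℝ) by push_cast; linarith]
  exact_mod_cast key

section

variable {M N : Type*}

lemma flipVar_eq_add_single [DecidableEq N] {x : N → ℝ} {j : N} (h : x j = 0) :
    flipVar x j = x + Pi.single j 1 := by
  ext k
  rcases eq_or_ne k j with rfl | hk
  · simp [flipVar, h]
  · simp [flipVar, hk]

lemma sLHS_add_single [Fintype N] [DecidableEq N] (a : M → N → ℝ) (x : N → ℝ) (j : N) (i : M) :
    sLHS a (x + Pi.single j 1) i = sLHS a x i + a i j := by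
  simp [sLHS, mul_add, Finset.sum_add_distrib, Pi.single_apply]

lemma exists_sLHS_eq_natCast [Fintype N] {a : M → N → ℝ} {x : N → ℝ}
    (ha : ∀ i j, a i j = 0 ∨ a i j = 1) (hx : ∀ j, x j = 0 ∨ x j = 1) (i : M) :
    ∃ m : ℕ, sLHS a x i = m := by
  refine ⟨∑ j, if a i j = 1 ∧ x j = 1 then 1 else 0, ?_⟩
  rw [sLHS, Nat.cast_sum]
  refine Finset.sum_congr rfl fun j _ => ?_
  rcases ha i j with h | h <;> rcases hx j with h' | h' <;> norm_num [h, h']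

lemma penObj_mixedDiff [Fintype M] [Fintype N] [DecidableEq N]
    (ML MG ME : Finset M) (a : M → N → ℝ) (b : M → ℕ) (c : N → ℝ) (wp wm : M → ℝ)
    (x : N → ℝ) (j₁ j₂ : N) :
    penObj ML MG ME a b c wp wm (x + Pi.single j₁ 1 + Pi.single j₂ 1)
        - penObj ML MG ME a b c wp wm (x + Pi.single j₁ 1)
        - penObj ML MG ME a b c wp wm (x + Pi.single j₂ 1) + penObj ML MG ME a b c wp wm x
      = ∑ i ∈ ML ∪ ME, wp i * mixedDiff (fun t => max (t - b i) 0) (sLHS a x i) (a i j₁) (a i j₂)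
        + ∑ i ∈ MG ∪ ME,
            wm i * mixedDiff (fun t => max (b i - t) 0) (sLHS a x i) (a i j₁) (a i j₂) := by
  simp only [penObj, mixedDiff, sLHS_add_single, mul_add, mul_sub, Pi.add_apply,
    Finset.sum_add_distrib, Finset.sum_sub_distrib]
  ring

lemma sum_mul_mixedDiff_eq_sum_filter [Fintype M] {a : M → N → ℝ}
    (ha : ∀ i j, a i j = 0 ∨ a i j = 1) (j₁ j₂ : N) (T : Finset M) (w : M → ℝ)
    (f : M → ℝ → ℝ) (t : M → ℝ) (p : M → Prop) [DecidablePred p]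
    (hf : ∀ i, mixedDiff (f i) (t i) 1 1 = if p i then 1 else 0) :
    ∑ i ∈ T, w i * mixedDiff (f i) (t i) (a i j₁) (a i j₂)
      = ∑ i ∈ (Sset a j₁ ∩ Sset a j₂ ∩ T).filter p, w i := by
  rw [Finset.inter_comm, ← Finset.filter_mem_eq_inter, Finset.filter_filter, Finset.sum_filter]
  refine Finset.sum_congr rfl fun i _ => ?_
  rw [mixedDiff_of_mem_zero_one _ _ (ha i j₁) (ha i j₂)]
  by_cases h : a i j₁ = 1 ∧ a i j₂ = 1 <;> simp [Sset, h, hf]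

end

theorem stmt_6 {M N : Type*} [Fintype M] [Fintype N] [DecidableEq N]
    (ML MG ME : Finset M) (a : M → N → ℝ) (b : M → ℕ) (c : N → ℝ)
    (wp wm : M → ℝ)
    (ha : ∀ i j, a i j = 0 ∨ a i j = 1)
    (hwp : ∀ i, 0 ≤ wp i) (hwm : ∀ i, 0 ≤ wm i)
    (x : N → ℝ) (hx : ∀ j', x j' = 0 ∨ x j' = 1)
    (hlocal : ∀ j, 0 ≤ penObj ML MG ME a b c wp wm (flipVar x j) - penObj ML MG ME a b c wp wm x)
    (j₁ j₂ : N) (hne : j₁ ≠ j₂) (h1 : x j₁ = 0) (h2 : x j₂ = 0) :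
    (penObj ML MG ME a b c wp wm (flipVar (flipVar x j₁) j₂) - penObj ML MG ME a b c wp wm x
      = (penObj ML MG ME a b c wp wm (flipVar x j₁) - penObj ML MG ME a b c wp wm x)
        + (penObj ML MG ME a b c wp wm (flipVar x j₂) - penObj ML MG ME a b c wp wm x)
        + ∑ i ∈ (Sset a j₁ ∩ Sset a j₂ ∩ (ML ∪ ME)).filter
            (fun i => sLHS a x i = (b i : ℝ) - 1), wp i
        + ∑ i ∈ (Sset a j₁ ∩ Sset a j₂ ∩ (MG ∪ ME)).filter
            (fun i => sLHS a x i = (b i : ℝ) - 1), wm i) ∧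
    0 ≤ penObj ML MG ME a b c wp wm (flipVar (flipVar x j₁) j₂) - penObj ML MG ME a b c wp wm x := by
  have hrow : ∀ i, ∃ k : ℤ, sLHS a x i - b i = k := fun i => by
    obtain ⟨m, hm⟩ := exists_sLHS_eq_natCast ha hx i
    exact ⟨m - b i, by push_cast; rw [hm]⟩
  choose k hk using hrow
  have hflip₁₂ : flipVar (flipVar x j₁) j₂ = x + Pi.single j₁ 1 + Pi.single j₂ 1 := by
    rw [flipVar_eq_add_single h1, flipVar_eq_add_single (by simp [hne.symm, h2])]
  have hcorr := penObj_mixedDiff ML MG ME a b c wp wm x j₁ j₂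
  rw [sum_mul_mixedDiff_eq_sum_filter ha j₁ j₂ _ wp _ _ _ fun i => mixedDiff_max_sub_zero _ (hk i),
    sum_mul_mixedDiff_eq_sum_filter ha j₁ j₂ _ wm _ _ _ fun i => mixedDiff_max_rsub_zero _ (hk i),
    ← hflip₁₂, ← flipVar_eq_add_single h1, ← flipVar_eq_add_single h2] at hcorr
  have hwp_sum := Finset.sum_nonneg fun i (_ : i ∈ (Sset a j₁ ∩ Sset a j₂ ∩ (ML ∪ ME)).filter
    (fun i => sLHS a x i = (b i : ℝ) - 1)) => hwp i
  have hwm_sum := Finset.sum_nonneg fun i (_ : i ∈ (Sset a j₁ ∩ Sset a j₂ ∩ (MG ∪ ME)).filter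
    (fun i => sLHS a x i = (b i : ℝ) - 1)) => hwm i
  constructor <;> linarith [hlocal j₁, hlocal j₂]
end

section
/- (Lemma 1) If a binary solution x is locally optimal with respect to the 1-flip neighborhood (Δz̃_j(x) ≥ 0 for all j), then for distinct indices j₁, j₂, the simultaneous flip of x_{j₁} and x_{j₂} strictly improves z̃ (Δz̃_{j₁,j₂}(x) < 0) only if S_{j₁} ∩ S_{j₂} ≠ ∅ and x_{j₁} ≠ x_{j₂}. -/
/-!
Flipping `x_j` moves the left-hand side of every row `i` by `a_ij (1 - 2 x_j)`, and the penalty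
of each row is a convex function of its left-hand side. For a convex `f` and steps `u`, `v` of the
same sign, `f (s + u) + f (s + v) ≤ f s + f (s + u + v)`. If the two columns share no row, or
if `x_{j₁} = x_{j₂}`, then in every row the two steps have the same sign (or one vanishes), so
`z̃(x^{j₁}) + z̃(x^{j₂}) ≤ z̃(x) + z̃(x^{j₁ j₂})`, the linear cost part being additive. By 1-flip
optimality the left side is at least `2 z̃(x)`, so the double flip cannot improve.
-/

open scoped Classical BigOperators

theorem ConvexOn.map_add_add_map_add_le {f : ℝ → ℝ} (hf : ConvexOn ℝ Set.univ f) {u v : ℝ}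
    (huv : 0 ≤ u * v) (s : ℝ) : f (s + u) + f (s + v) ≤ f s + f (s + u + v) := by
  rcases eq_or_ne (u + v) 0 with h | h
  · obtain rfl : u = 0 := by nlinarith
    simp [add_comm]
  -- `s + u` and `s + v` are convex combinations of `s` and `s + u + v` with swapped weights.
  set p := u / (u + v) with hp_def
  set q := v / (u + v) with hq_def
  have hp : 0 ≤ p := by
    rw [hp_def, ← mul_div_mul_right u _ h]
    exact div_nonneg (by nlinarith [sq_nonneg u]) (mul_self_nonneg _)
  have hq : 0 ≤ q := by
    rw [hq_def, ← mul_div_mul_right v _ h]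
    exact div_nonneg (by nlinarith [sq_nonneg v]) (mul_self_nonneg _)
  have hpq : p + q = 1 := by rw [← add_div, div_self h]
  have h₁ := hf.2 (Set.mem_univ s) (Set.mem_univ (s + u + v)) hq hp (by linarith)
  have h₂ := hf.2 (Set.mem_univ s) (Set.mem_univ (s + u + v)) hp hq hpq
  have e₁ : q • s + p • (s + u + v) = s + u := by simp only [p, q, smul_eq_mul]; field_simp; ring
  have e₂ : p • s + q • (s + u + v) = s + v := by simp only [p, q, smul_eq_mul]; field_simp; ring
  rw [e₁, smul_eq_mul, smul_eq_mul] at h₁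
  rw [e₂, smul_eq_mul, smul_eq_mul] at h₂
  linear_combination h₁ + h₂ + (f s + f (s + u + v)) * hpq

theorem convexOn_mul_max_sub_const {w : ℝ} (hw : 0 ≤ w) (c : ℝ) :
    ConvexOn ℝ Set.univ fun t => w * max (t - c) 0 := by
  simpa using (((convexOn_id convex_univ).sub (concaveOn_const c convex_univ)).sup
    (convexOn_const 0 convex_univ)).smul hw

theorem convexOn_mul_max_const_sub {w : ℝ} (hw : 0 ≤ w) (c : ℝ) :
    ConvexOn ℝ Set.univ fun t => w * max (c - t) 0 := by
  simpa using (((convexOn_const c convex_univ).sub (concaveOn_id convex_univ)).sup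
    (convexOn_const 0 convex_univ)).smul hw

section Flip

variable {M N : Type*} [DecidableEq N]

theorem flipVar_apply_of_ne (x : N → ℝ) {j k : N} (h : k ≠ j) : flipVar x j k = x k :=
  Function.update_of_ne h _ _

variable [Fintype N]

theorem Fintype.sum_mul_update (f x : N → ℝ) (j : N) (v : ℝ) :
    ∑ k, f k * Function.update x j v k = ∑ k, f k * x k + f j * (v - x j) := by
  rw [← Finset.add_sum_erase _ _ (Finset.mem_univ j),
    ← Finset.add_sum_erase _ _ (Finset.mem_univ j), Function.update_self,
    Finset.sum_congr rfl fun k hk => by rw [Function.update_of_ne (Finset.ne_of_mem_erase hk)]]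
  ring

theorem sum_mul_flipVar (f x : N → ℝ) (j : N) :
    ∑ k, f k * flipVar x j k = ∑ k, f k * x k + f j * (1 - 2 * x j) := by
  rw [flipVar, Fintype.sum_mul_update]
  ring

theorem sum_mul_flipVar_flipVar (f x : N → ℝ) {j₁ j₂ : N} (hne : j₁ ≠ j₂) :
    ∑ k, f k * flipVar (flipVar x j₁) j₂ k
      = ∑ k, f k * x k + f j₁ * (1 - 2 * x j₁) + f j₂ * (1 - 2 * x j₂) := by
  rw [sum_mul_flipVar, sum_mul_flipVar, flipVar_apply_of_ne x hne.symm]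

theorem sLHS_flipVar (a : M → N → ℝ) (x : N → ℝ) (j : N) (i : M) :
    sLHS a (flipVar x j) i = sLHS a x i + a i j * (1 - 2 * x j) :=
  sum_mul_flipVar _ x j

theorem sLHS_flipVar_flipVar (a : M → N → ℝ) (x : N → ℝ) {j₁ j₂ : N} (hne : j₁ ≠ j₂) (i : M) :
    sLHS a (flipVar (flipVar x j₁) j₂) i
      = sLHS a x i + a i j₁ * (1 - 2 * x j₁) + a i j₂ * (1 - 2 * x j₂) :=
  sum_mul_flipVar_flipVar _ x hne

theorem sum_convex_sLHS_flipVar_add_le (a : M → N → ℝ) (x : N → ℝ) {j₁ j₂ : N} (hne : j₁ ≠ j₂)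
    (h : ∀ i, 0 ≤ a i j₁ * (1 - 2 * x j₁) * (a i j₂ * (1 - 2 * x j₂)))
    (T : Finset M) (g : M → ℝ → ℝ) (hg : ∀ i, ConvexOn ℝ Set.univ (g i)) :
    ∑ i ∈ T, g i (sLHS a (flipVar x j₁) i) + ∑ i ∈ T, g i (sLHS a (flipVar x j₂) i)
      ≤ ∑ i ∈ T, g i (sLHS a x i) + ∑ i ∈ T, g i (sLHS a (flipVar (flipVar x j₁) j₂) i) := by
  rw [← Finset.sum_add_distrib, ← Finset.sum_add_distrib]
  refine Finset.sum_le_sum fun i _ => ?_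
  rw [sLHS_flipVar, sLHS_flipVar, sLHS_flipVar_flipVar a x hne]
  exact (hg i).map_add_add_map_add_le (h i) _

end Flip

theorem penObj_flipVar_add_flipVar_le {M N : Type*} [Fintype M] [Fintype N] [DecidableEq N]
    (ML MG ME : Finset M) (a : M → N → ℝ) (b : M → ℕ) (c : N → ℝ) (wp wm : M → ℝ)
    (hwp : ∀ i, 0 ≤ wp i) (hwm : ∀ i, 0 ≤ wm i) (x : N → ℝ) {j₁ j₂ : N} (hne : j₁ ≠ j₂)
    (h : ∀ i, 0 ≤ a i j₁ * (1 - 2 * x j₁) * (a i j₂ * (1 - 2 * x j₂))) :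
    penObj ML MG ME a b c wp wm (flipVar x j₁) + penObj ML MG ME a b c wp wm (flipVar x j₂)
      ≤ penObj ML MG ME a b c wp wm x
        + penObj ML MG ME a b c wp wm (flipVar (flipVar x j₁) j₂) := by
  have hover := sum_convex_sLHS_flipVar_add_le a x hne h (ML ∪ ME)
    (fun i t => wp i * max (t - b i) 0) fun i => convexOn_mul_max_sub_const (hwp i) _
  have hunder := sum_convex_sLHS_flipVar_add_le a x hne h (MG ∪ ME)
    (fun i t => wm i * max (b i - t) 0) fun i => convexOn_mul_max_const_sub (hwm i) _
  beta_reduce at hover hunder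
  rw [penObj, penObj, penObj, penObj, sum_mul_flipVar, sum_mul_flipVar,
    sum_mul_flipVar_flipVar c x hne]
  linarith

theorem mul_eq_zero_of_not_nonempty_Sset_inter {M N : Type*} [Fintype M] {a : M → N → ℝ}
    (ha : ∀ i j, a i j = 0 ∨ a i j = 1) {j₁ j₂ : N} (h : ¬(Sset a j₁ ∩ Sset a j₂).Nonempty)
    (i : M) : a i j₁ * a i j₂ = 0 := by
  rcases ha i j₁ with h₁ | h₁
  · rw [h₁, zero_mul]
  rcases ha i j₂ with h₂ | h₂
  · rw [h₂, mul_zero]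
  exact absurd ⟨i, by simp [Sset, h₁, h₂]⟩ h

theorem stmt_7_general {M N : Type*} [Fintype M] [Fintype N] [DecidableEq N]
    (ML MG ME : Finset M) (a : M → N → ℝ) (b : M → ℕ) (c : N → ℝ)
    (wp wm : M → ℝ)
    (ha : ∀ i j, a i j = 0 ∨ a i j = 1)
    (hwp : ∀ i, 0 ≤ wp i) (hwm : ∀ i, 0 ≤ wm i)
    (x : N → ℝ)
    (hlocal : ∀ j, 0 ≤ penObj ML MG ME a b c wp wm (flipVar x j) - penObj ML MG ME a b c wp wm x)
    (j₁ j₂ : N) (hne : j₁ ≠ j₂)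
    (himp : penObj ML MG ME a b c wp wm (flipVar (flipVar x j₁) j₂)
        - penObj ML MG ME a b c wp wm x < 0) :
    (Sset a j₁ ∩ Sset a j₂).Nonempty ∧ x j₁ ≠ x j₂ := by
  have hsuper := penObj_flipVar_add_flipVar_le ML MG ME a b c wp wm hwp hwm x hne
  have h₁ := hlocal j₁
  have h₂ := hlocal j₂
  refine ⟨?_, fun hx => ?_⟩
  · by_contra hdisj
    have := hsuper fun i => by
      rw [mul_mul_mul_comm, mul_eq_zero_of_not_nonempty_Sset_inter ha hdisj i, zero_mul]
    linarith
  · have ha_nonneg : ∀ i j, 0 ≤ a i j := fun i j => by rcases ha i j with h | h <;> simp [h]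
    have := hsuper fun i => by
      rw [hx, mul_mul_mul_comm, ← sq]
      exact mul_nonneg (mul_nonneg (ha_nonneg i j₁) (ha_nonneg i j₂)) (sq_nonneg _)
    linarith

theorem stmt_7 {M N : Type*} [Fintype M] [Fintype N] [DecidableEq N]
    (ML MG ME : Finset M) (a : M → N → ℝ) (b : M → ℕ) (c : N → ℝ)
    (wp wm : M → ℝ)
    (ha : ∀ i j, a i j = 0 ∨ a i j = 1)
    (hwp : ∀ i, 0 ≤ wp i) (hwm : ∀ i, 0 ≤ wm i)
    (x : N → ℝ) (hx : ∀ j', x j' = 0 ∨ x j' = 1)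
    (hlocal : ∀ j, 0 ≤ penObj ML MG ME a b c wp wm (flipVar x j) - penObj ML MG ME a b c wp wm x)
    (j₁ j₂ : N) (hne : j₁ ≠ j₂)
    (himp : penObj ML MG ME a b c wp wm (flipVar (flipVar x j₁) j₂)
        - penObj ML MG ME a b c wp wm x < 0) :
    (Sset a j₁ ∩ Sset a j₂).Nonempty ∧ x j₁ ≠ x j₂ :=
  stmt_7_general ML MG ME a b c wp wm ha hwp hwm x hlocal j₁ j₂ hne himp
end
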